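/- Let Θ ∈ GL(2,ℤ) be hyperbolic, i.e. det Θ = ±1 and no eigenvalue of Θ is a root of unity (equivalently: if det Θ = 1 then |tr Θ| > 2, and if det Θ = −1 then tr Θ ≠ 0). Then π_Θ = ℤ² ⋊_Θ ℤ is not virtually nilpotent: π_Θ has no nilpotent subgroup of finite index. -/

import Mathlib

/-- The additive automorphism of `ℤ²` given by a matrix `Θ ∈ GL(2,ℤ)`. -/
def thetaAddAut (Θ : GL (Fin 2) ℤ) : (Fin 2 → ℤ) ≃+ (Fin 2 → ℤ) where
  toFun v := (Θ : Matrix (Fin 2) (Fin 2) ℤ).mulVec v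
  invFun v := (Θ⁻¹ : GL (Fin 2) ℤ).1.mulVec v
  left_inv v := by
    simp only [Matrix.mulVec_mulVec, Units.inv_mul, Matrix.one_mulVec]
  right_inv v := by
    simp only [Matrix.mulVec_mulVec, Units.mul_inv, Matrix.one_mulVec]
  map_add' v w := by simpa using Matrix.mulVec_add (Θ : Matrix (Fin 2) (Fin 2) ℤ) v w

/-- `π_Θ = ℤ² ⋊_Θ ℤ`, the semidirect product in which the generator of `ℤ`
acts on `ℤ²` by the matrix `Θ`. -/
abbrev piTheta (Θ : GL (Fin 2) ℤ) : Type :=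
  SemidirectProduct (Multiplicative (Fin 2 → ℤ)) (Multiplicative ℤ)
    (zpowersHom (MulAut (Multiplicative (Fin 2 → ℤ)))
      (AddEquiv.toMultiplicative (thetaAddAut Θ)))

/-!
A finite-index subgroup `H` of `π_Θ` contains some `t ^ k` with `k > 0`, where `t` generates the
`ℤ` factor, and some nonzero `w ∈ ℤ²`. Taking the commutator with `t ^ k` acts on `ℤ²` as
`1 - Θ ^ k`, so if `H` is nilpotent then `(1 - Θ ^ k) ^ n w = 0` for some `n`. But `1 - Θ ^ k` is
nonsingular: `det (1 - Θ ^ k) = 1 - tr (Θ ^ k) + det Θ ^ k`, and when `det Θ = 1` the traces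
`tr (Θ ^ n)` grow strictly in absolute value from `tr (Θ ^ 0) = 2`, by the recurrence
`tr (Θ ^ (n + 2)) = tr Θ · tr (Θ ^ (n + 1)) - tr (Θ ^ n)`. When `det Θ = -1`, the matrix `Θ ^ 2`
has determinant `1` and trace `(tr Θ) ^ 2 + 2`, and `1 - Θ ^ k` divides `1 - (Θ ^ 2) ^ k`.
-/

open scoped commutatorElement Matrix
open SemidirectProduct Multiplicative

theorem Group.exists_iterate_commutatorElement_eq_one {G : Type*} [Group G] [Group.IsNilpotent G]
    (g x : G) : ∃ n, (⁅·, g⁆)^[n] x = 1 := by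
  obtain ⟨n, hn⟩ := Subgroup.nilpotent_iff_lowerCentralSeries.mp ‹Group.IsNilpotent G›
  have mem : ∀ i, (⁅·, g⁆)^[i] x ∈ (⊤ : Subgroup G).lowerCentralSeries i := by
    intro i
    induction i with
    | zero => exact Subgroup.mem_top x
    | succ i ih =>
      rw [Function.iterate_succ_apply']
      exact Subgroup.commutator_mem_commutator ih (Subgroup.mem_top g)
  exact ⟨n, Subgroup.mem_bot.mp (hn ▸ mem n)⟩

theorem Subgroup.exists_iterate_commutatorElement_eq_one {G : Type*} [Group G] (H : Subgroup G)
    [Group.IsNilpotent H] {g x : G} (hg : g ∈ H) (hx : x ∈ H) : ∃ n, (⁅·, g⁆)^[n] x = 1 := by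
  obtain ⟨n, hn⟩ := Group.exists_iterate_commutatorElement_eq_one (⟨g, hg⟩ : H) ⟨x, hx⟩
  have semiconj : Function.Semiconj H.subtype (⁅·, ⟨g, hg⟩⁆) (⁅·, g⁆) :=
    fun y => map_commutatorElement H.subtype y _
  exact ⟨n, by simpa [hn] using (semiconj.iterate_right n ⟨x, hx⟩).symm⟩

theorem SemidirectProduct.commutatorElement_inl_inr {N G : Type*} [Group N] [Group G]
    {φ : G →* MulAut N} (n : N) (g : G) :
    ⁅(inl n : N ⋊[φ] G), (inr g : N ⋊[φ] G)⁆ = inl (n * (φ g n)⁻¹) := by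
  ext <;> simp [commutatorElement_def]

theorem zpowersHom_thetaAddAut_natCast_apply (Θ : GL (Fin 2) ℤ) (k : ℕ) (v : Fin 2 → ℤ) :
    zpowersHom _ (AddEquiv.toMultiplicative (thetaAddAut Θ)) (ofAdd (k : ℤ)) (ofAdd v)
      = ofAdd ((Θ : Matrix (Fin 2) (Fin 2) ℤ) ^ k *ᵥ v) := by
  induction k generalizing v with
  | zero => simp
  | succ k ih =>
    rw [zpowersHom_apply, toAdd_ofAdd] at *
    rw [Nat.cast_succ, zpow_add_one, MulAut.mul_apply, pow_succ, ← Matrix.mulVec_mulVec, ← ih]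
    rfl

namespace Matrix

variable {R : Type*} [CommRing R]

theorem det_one_sub_fin_two (A : Matrix (Fin 2) (Fin 2) R) :
    (1 - A).det = 1 - A.trace + A.det := by
  simp [det_fin_two, trace_fin_two]
  ring

theorem sq_fin_two (A : Matrix (Fin 2) (Fin 2) R) : A ^ 2 = A.trace • A - A.det • 1 := by
  ext i j
  fin_cases i <;> fin_cases j <;>
    simp [sq, mul_apply, Fin.sum_univ_two, trace_fin_two, det_fin_two] <;> ring

theorem trace_pow_add_two_fin_two (A : Matrix (Fin 2) (Fin 2) R) (n : ℕ) :
    (A ^ (n + 2)).trace = A.trace * (A ^ (n + 1)).trace - A.det * (A ^ n).trace := by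
  rw [pow_add, sq_fin_two, mul_sub, mul_smul_comm, mul_smul_comm, mul_one, ← pow_succ,
    trace_sub, trace_smul, trace_smul, smul_eq_mul, smul_eq_mul]

theorem two_lt_abs_trace_pow_of_det_eq_one {A : Matrix (Fin 2) (Fin 2) ℤ} (hdet : A.det = 1)
    (htr : 2 < |A.trace|) {m : ℕ} (hm : m ≠ 0) : 2 < |(A ^ m).trace| := by
  have step : ∀ n, |(A ^ n).trace| < |(A ^ (n + 1)).trace| := by
    intro n
    induction n with
    | zero => simpa using htr
    | succ n ih =>
      have hrec : (A ^ (n + 2)).trace = A.trace * (A ^ (n + 1)).trace - (A ^ n).trace := by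
        rw [trace_pow_add_two_fin_two, hdet, one_mul]
      have h := abs_sub_abs_le_abs_sub (A.trace * (A ^ (n + 1)).trace) ((A ^ n).trace)
      rw [abs_mul, ← hrec] at h
      nlinarith [abs_nonneg (A ^ (n + 1)).trace]
  calc (2 : ℤ) = |(A ^ 0).trace| := by simp
    _ < |(A ^ m).trace| := strictMono_nat_of_lt_succ step (Nat.pos_of_ne_zero hm)

theorem det_one_sub_pow_ne_zero_of_det_eq_one {A : Matrix (Fin 2) (Fin 2) ℤ} (hdet : A.det = 1)
    (htr : 2 < |A.trace|) {m : ℕ} (hm : m ≠ 0) : (1 - A ^ m).det ≠ 0 := by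
  have := two_lt_abs_trace_pow_of_det_eq_one hdet htr hm
  rw [det_one_sub_fin_two, det_pow, hdet, one_pow]
  intro h
  rw [show (A ^ m).trace = 2 by linarith] at this
  norm_num at this

theorem det_one_sub_pow_ne_zero {A : Matrix (Fin 2) (Fin 2) ℤ}
    (hA : (A.det = 1 ∧ 2 < |A.trace|) ∨ (A.det = -1 ∧ A.trace ≠ 0)) {m : ℕ} (hm : m ≠ 0) :
    (1 - A ^ m).det ≠ 0 := by
  rcases hA with ⟨hdet, htr⟩ | ⟨hdet, htr⟩
  · exact det_one_sub_pow_ne_zero_of_det_eq_one hdet htr hm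
  · have hsq_det : (A ^ 2).det = 1 := by rw [det_pow, hdet]; norm_num
    have hsq_tr : 2 < |(A ^ 2).trace| := by
      rw [trace_pow_add_two_fin_two A 0, hdet]
      simp only [zero_add, pow_one, pow_zero, trace_one, Fintype.card_fin, Nat.cast_ofNat]
      have : 0 < A.trace * A.trace := mul_self_pos.mpr htr
      rw [abs_of_pos (by linarith)]
      linarith
    have factor : 1 - (A ^ 2) ^ m = (1 - A ^ m) * (1 + A ^ m) := by
      rw [← pow_mul, mul_comm, pow_mul, sq]; noncomm_ring
    have := det_one_sub_pow_ne_zero_of_det_eq_one hsq_det hsq_tr hm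
    rw [factor, det_mul] at this
    exact left_ne_zero_of_mul this

end Matrix

theorem iterate_commutatorElement_inl_inr (Θ : GL (Fin 2) ℤ) (k i : ℕ) (v : Fin 2 → ℤ) :
    (⁅·, (inr (ofAdd (k : ℤ)) : piTheta Θ)⁆)^[i] (inl (ofAdd v))
      = inl (ofAdd ((1 - (Θ : Matrix (Fin 2) (Fin 2) ℤ) ^ k) ^ i *ᵥ v)) := by
  induction i with
  | zero => simp
  | succ i ih =>
    rw [Function.iterate_succ_apply', ih, commutatorElement_inl_inr,
      zpowersHom_thetaAddAut_natCast_apply, pow_succ', ← Matrix.mulVec_mulVec,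
      Matrix.sub_mulVec, Matrix.one_mulVec]
    rfl

/-- if `Θ ∈ GL(2,ℤ)` is hyperbolic (no eigenvalue a root of unity;
equivalently `det Θ = 1` and `|tr Θ| > 2`, or `det Θ = −1` and `tr Θ ≠ 0`), then
`π_Θ = ℤ² ⋊_Θ ℤ` is not virtually nilpotent: it has no nilpotent subgroup of
finite index. -/
theorem stmt16 (Θ : GL (Fin 2) ℤ)
    (hhyp : ((Θ : Matrix (Fin 2) (Fin 2) ℤ).det = 1 ∧
        2 < |(Θ : Matrix (Fin 2) (Fin 2) ℤ).trace|) ∨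
      ((Θ : Matrix (Fin 2) (Fin 2) ℤ).det = -1 ∧
        (Θ : Matrix (Fin 2) (Fin 2) ℤ).trace ≠ 0)) :
    ¬ ∃ H : Subgroup (piTheta Θ), H.index ≠ 0 ∧ Group.IsNilpotent H := by
  rintro ⟨H, hindex, hnil⟩
  obtain ⟨k, hk, -, hg⟩ := H.exists_pow_mem_of_index_ne_zero hindex (inr (ofAdd 1) : piTheta Θ)
  obtain ⟨j, hj, -, hx⟩ := H.exists_pow_mem_of_index_ne_zero hindex
    (inl (ofAdd (Pi.single 0 1)) : piTheta Θ)
  rw [← map_pow, ← ofAdd_nsmul, nsmul_one] at hg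
  rw [← map_pow, ← ofAdd_nsmul] at hx
  obtain ⟨n, hn⟩ := H.exists_iterate_commutatorElement_eq_one hg hx
  rw [iterate_commutatorElement_inl_inr] at hn
  have hw : j • (Pi.single 0 1 : Fin 2 → ℤ) ≠ 0 := smul_ne_zero hj.ne' (by simp)
  have hker := ofAdd_eq_one.mp ((map_eq_one_iff _ inl_injective).mp hn)
  have hdet := Matrix.exists_mulVec_eq_zero_iff.mp ⟨_, hw, hker⟩
  rw [Matrix.det_pow] at hdet
  exact Matrix.det_one_sub_pow_ne_zero hhyp hk.ne' (pow_eq_zero_iff' |>.mp hdet).1
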